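/- arXiv:2504.17033 — 2 statements merged into one kernel-verified Lean document; each statement's English description precedes it below -/
import Mathlib

section
/- Pull Minimum lemma, second part: let d̂ be an estimate function, let B, 𝓑 ∈ ℝ≥0∞ with 𝓑 < B, and let S be a set of vertices such that for every vertex v with d̂(v) ≠ d(v) and d(v) < B there exists a complete vertex u ∈ S such that the shortest path to v visits u. Let X := {x ∈ S : d̂(x) < 𝓑}. Then for every 𝓑' < 𝓑, the set {v : d(v) < 𝓑' and there exists u ∈ S such that the shortest path to v visits u} equals the set {v : d(v) < 𝓑' and there exists u ∈ X such that the shortest path to v visits u}. -/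
open scoped ENNReal

namespace SSSP

variable {V : Type*}

/-- The weight of a walk (a list of vertices): the sum of `w` over consecutive pairs.
A one-vertex walk has weight 0. -/
noncomputable def walkWeight (w : V → V → ℝ≥0∞) : List V → ℝ≥0∞
  | [] => 0
  | [_] => 0
  | a :: b :: p => w a b + walkWeight w (b :: p)

/-- `p` is a walk from `u` to `v`: a nonempty list beginning at `u` and ending at `v`. -/
def IsWalk (u v : V) (p : List V) : Prop :=
  p ≠ [] ∧ p.head? = some u ∧ p.getLast? = some v

/-- The distance from `u` to `v`: the infimum of the weights of all walks from `u` to `v`. -/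
noncomputable def dist (w : V → V → ℝ≥0∞) (u v : V) : ℝ≥0∞ :=
  ⨅ p : {p : List V // IsWalk u v p}, walkWeight w p.1

/-- The shortest path (from `s`) to `v` visits `u`. -/
def Visits (w : V → V → ℝ≥0∞) (s u v : V) : Prop :=
  dist w s u + dist w u v = dist w s v

/-- The uniqueness assumption: any two distinct walks starting from `s` with finite
weight have different weights. -/
def UniqueWeights (w : V → V → ℝ≥0∞) (s : V) : Prop :=
  ∀ p q : List V, p ≠ [] → q ≠ [] → p.head? = some s → q.head? = some s →
    walkWeight w p ≠ ⊤ → walkWeight w q ≠ ⊤ → walkWeight w p = walkWeight w q → p = q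

/-- The relaxation operator. -/
noncomputable def relax (w : V → V → ℝ≥0∞) (f : V → ℝ≥0∞) : V → ℝ≥0∞ :=
  fun v => min (f v) (⨅ u, f u + w u v)

end SSSP

/-! If the vertex `u ∈ S` visited by the shortest path to `v` is not complete, the hypothesis on `S`
applied to `u` itself (legitimate since `d(u) ≤ d(v) < 𝓑 < B`) yields a complete `u' ∈ S` visited by
the shortest path to `u`, hence by that to `v`; and `d̂(u') = d(u') ≤ d(u) < 𝓑` puts `u'` in `X`. -/

namespace SSSP

section

variable {V : Type*}

lemma walkWeight_append (w : V → V → ℝ≥0∞) {b : V} :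
    ∀ {p : List V}, p.getLast? = some b →
      ∀ t, walkWeight w (p ++ t) = walkWeight w p + walkWeight w (b :: t)
  | [a], h, t => by
      obtain rfl : a = b := by simpa using h
      simp [walkWeight]
  | a :: a' :: p, h, t => by
      rw [List.getLast?_cons_cons] at h
      simp only [List.cons_append, walkWeight]
      rw [← List.cons_append, walkWeight_append w h, add_assoc]

lemma IsWalk.append_tail {a b c : V} {p q : List V}
    (hp : IsWalk a b p) (hq : IsWalk b c q) : IsWalk a c (p ++ q.tail) := by
  obtain ⟨hp0, hpa, hpb⟩ := hp
  obtain ⟨t, rfl⟩ : ∃ t, q = b :: t := by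
    obtain ⟨x, t, rfl⟩ := List.exists_cons_of_ne_nil hq.1
    exact ⟨t, by simpa using hq.2.1⟩
  refine ⟨by simp [hp0], by rwa [List.head?_append_of_ne_nil _ hp0], ?_⟩
  rcases t with _ | ⟨x, t⟩
  · simpa [← hq.2.2] using hpb
  · rw [List.tail_cons, List.getLast?_append_of_ne_nil _ (List.cons_ne_nil x t)]
    simpa [List.getLast?_cons_cons] using hq.2.2

lemma walkWeight_append_tail (w : V → V → ℝ≥0∞) {a b c : V} {p q : List V}
    (hp : IsWalk a b p) (hq : IsWalk b c q) :
    walkWeight w (p ++ q.tail) = walkWeight w p + walkWeight w q := by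
  obtain ⟨x, t, rfl⟩ := List.exists_cons_of_ne_nil hq.1
  obtain rfl : x = b := by simpa using hq.2.1
  exact walkWeight_append w hp.2.2 t

lemma dist_triangle (w : V → V → ℝ≥0∞) (a b c : V) :
    dist w a c ≤ dist w a b + dist w b c := by
  simp only [dist, ENNReal.iInf_add, ENNReal.add_iInf]
  refine le_iInf₂ fun q p => ?_
  rw [← walkWeight_append_tail w p.2 q.2]
  exact iInf_le (fun r : {r : List V // IsWalk a c r} => walkWeight w r.1)
    ⟨_, p.2.append_tail q.2⟩

lemma Visits.dist_le {w : V → V → ℝ≥0∞} {s u v : V} (h : Visits w s u v) :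
    dist w s u ≤ dist w s v :=
  h ▸ le_self_add

lemma Visits.trans {w : V → V → ℝ≥0∞} {s u' u v : V}
    (h' : Visits w s u' u) (h : Visits w s u v) : Visits w s u' v := by
  refine le_antisymm ?_ (dist_triangle w s u' v)
  calc dist w s u' + dist w u' v
      ≤ dist w s u' + (dist w u' u + dist w u v) := by gcongr; exact dist_triangle w u' u v
    _ = dist w s v := by rw [← add_assoc, h', h]

end

theorem pull_minimum_second_general {V : Type*} (w : V → V → ℝ≥0∞) (s : V)
    (dhat : V → ℝ≥0∞)
    (B 𝓑 : ℝ≥0∞) (hBB : 𝓑 < B) (S : Set V)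
    (hS : ∀ v, dhat v ≠ dist w s v → dist w s v < B →
      ∃ u ∈ S, dhat u = dist w s u ∧ Visits w s u v) :
    ∀ 𝓑' < 𝓑,
      {v | dist w s v < 𝓑' ∧ ∃ u ∈ S, Visits w s u v} =
        {v | dist w s v < 𝓑' ∧ ∃ u ∈ {x ∈ S | dhat x < 𝓑}, Visits w s u v} := by
  intro 𝓑' h𝓑'
  ext v
  refine ⟨fun ⟨hv, u, huS, huv⟩ => ⟨hv, ?_⟩, fun ⟨hv, u, hu, huv⟩ => ⟨hv, u, hu.1, huv⟩⟩
  have hu𝓑 : dist w s u < 𝓑 := huv.dist_le.trans_lt (hv.trans h𝓑')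
  by_cases hcomplete : dhat u = dist w s u
  · exact ⟨u, ⟨huS, hcomplete ▸ hu𝓑⟩, huv⟩
  · obtain ⟨u', hu'S, hu'complete, hu'u⟩ := hS u hcomplete (hu𝓑.trans hBB)
    exact ⟨u', ⟨hu'S, hu'complete ▸ hu'u.dist_le.trans_lt hu𝓑⟩, hu'u.trans huv⟩

/-- Pull Minimum lemma, second part. -/
theorem pull_minimum_second {V : Type*} [Fintype V] (w : V → V → ℝ≥0∞) (s : V)
    (dhat : V → ℝ≥0∞) (hest : ∀ v, dist w s v ≤ dhat v)
    (B 𝓑 : ℝ≥0∞) (hBB : 𝓑 < B) (S : Set V)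
    (hS : ∀ v, dhat v ≠ dist w s v → dist w s v < B →
      ∃ u ∈ S, dhat u = dist w s u ∧ Visits w s u v) :
    ∀ 𝓑' < 𝓑,
      {v | dist w s v < 𝓑' ∧ ∃ u ∈ S, Visits w s u v} =
        {v | dist w s v < 𝓑' ∧ ∃ u ∈ {x ∈ S | dhat x < 𝓑}, Visits w s u v} :=
  pull_minimum_second_general w s dhat B 𝓑 hBB S hS

end SSSP
end

section
/- Constant-degree transformation preserving shortest paths: suppose w(u,u) = ⊤ for every u ∈ V (no self-loops), let E := {(u,v) ∈ V × V : w(u,v) < ⊤} and m := |E|. Then there exist a finite type V' with |V'| ≤ 2m + |V|, a weight function w' : V' → V' → ℝ≥0∞, and an injective map φ : V → V' such that: (i) every x ∈ V' has at most 2 out-neighbors and at most 2 in-neighbors, i.e. |{y : w'(x,y) < ⊤}| ≤ 2 and |{y : w'(y,x) < ⊤}| ≤ 2; (ii) the number of pairs (x,y) with w'(x,y) < ⊤ is at most 3m; (iii) every finite value w'(x,y) is either 0 or equal to w(u,v) for some (u,v) ∈ E; (iv) for all u, v ∈ V, the distance from φ(u) to φ(v) in (V', w') equals dist(u,v) in (V,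 w). -/
open scoped ENNReal

/-!
Every vertex `u` keeps a node of its own and every edge `e = (u, v)` gets two new nodes, an
out-port at `u` and an in-port at `v`. In a fixed order of the edges, the out-ports of `u` are
strung on a path of weight-0 arcs leaving `u`, the in-ports of `v` on a path of weight-0 arcs
entering `v`, and `e` itself becomes the arc from its out-port to its in-port, of weight `w u v`.
Every node then has at most two in- and two out-neighbours, and each edge accounts for three arcs.
An edge `u → v` is simulated by the walk from `u` along its out-chain, across `e`, and along the
in-chain of `v`; conversely, sending a port to the endpoint it sits at maps weight-0 arcs to single
vertices and the arc of `e` to `e`, so no walk of the new graph is shorter than its image.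
-/

open Relation

namespace SSSP

section Walks

variable {V : Type*} (w : V → V → ℝ≥0∞)

lemma isWalk_singleton (u : V) : IsWalk u u [u] := ⟨List.cons_ne_nil _ _, rfl, rfl⟩

lemma IsWalk.cons {y v : V} {q : List V} (x : V) (h : IsWalk y v q) : IsWalk x v (x :: q) := by
  obtain ⟨hne, -, hlast⟩ := h
  obtain ⟨b, r, rfl⟩ := List.exists_cons_of_ne_nil hne
  exact ⟨List.cons_ne_nil _ _, rfl, by rwa [List.getLast?_cons_cons]⟩

lemma IsWalk.of_cons_cons {u v a b : V} {r : List V} (h : IsWalk u v (a :: b :: r)) :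
    IsWalk b v (b :: r) :=
  ⟨List.cons_ne_nil _ _, rfl, by rw [← h.2.2, List.getLast?_cons_cons]⟩

lemma walkWeight_cons {x y : V} {q : List V} (h : q.head? = some y) :
    walkWeight w (x :: q) = w x y + walkWeight w q := by
  cases q with
  | nil => cases h
  | cons b r => obtain rfl : b = y := Option.some.inj h; rfl

lemma dist_le_walkWeight {u v : V} {p : List V} (hp : IsWalk u v p) :
    dist w u v ≤ walkWeight w p :=
  iInf_le (fun q : {q : List V // IsWalk u v q} => walkWeight w q.1) ⟨p, hp⟩

lemma dist_self (u : V) : dist w u u = 0 :=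
  nonpos_iff_eq_zero.1 (dist_le_walkWeight w (isWalk_singleton u))

lemma dist_le_add_dist (x y v : V) : dist w x v ≤ w x y + dist w y v := by
  unfold dist
  rw [ENNReal.add_iInf]
  exact le_iInf fun q => (dist_le_walkWeight w (q.2.cons x)).trans_eq (walkWeight_cons w q.2.2.1)

lemma dist_le_weight (u v : V) : dist w u v ≤ w u v := by
  simpa [dist_self] using dist_le_add_dist w u v v

lemma le_walkWeight_add {D : V → ℝ≥0∞} (hD : ∀ x y, D x ≤ w x y + D y) :
    ∀ {u v : V} {p : List V}, IsWalk u v p → D u ≤ walkWeight w p + D v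
  | _, _, [], h => absurd rfl h.1
  | u, v, [a], h => by
    obtain rfl : a = u := Option.some.inj h.2.1
    obtain rfl : a = v := Option.some.inj h.2.2
    exact le_add_self
  | u, v, a :: b :: r, h => by
    obtain rfl : a = u := Option.some.inj h.2.1
    calc D a ≤ w a b + D b := hD a b
      _ ≤ w a b + (walkWeight w (b :: r) + D v) := by
        gcongr
        exact le_walkWeight_add hD h.of_cons_cons
      _ = walkWeight w (a :: b :: r) + D v := (add_assoc _ _ _).symm

lemma le_dist_add {D : V → ℝ≥0∞} (hD : ∀ x y, D x ≤ w x y + D y) (u v : V) :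
    D u ≤ dist w u v + D v := by
  rw [dist, ENNReal.iInf_add]
  exact le_iInf fun p => le_walkWeight_add w hD p.2

lemma dist_triangle_s9 (u x v : V) : dist w u v ≤ dist w u x + dist w x v :=
  le_dist_add w (fun a b => dist_le_add_dist w a b v) u x

lemma dist_map_le {V' : Type*} (w' : V' → V' → ℝ≥0∞) (f : V → V')
    (hf : ∀ u v, dist w' (f u) (f v) ≤ w u v) (u v : V) :
    dist w' (f u) (f v) ≤ dist w u v := by
  simpa [dist_self] using le_dist_add w (D := fun x => dist w' (f x) (f v))
    (fun x y => (dist_triangle_s9 w' _ (f y) _).trans (add_le_add_left (hf x y) _)) u v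

lemma dist_eq_zero_of_reflTransGen {x y : V} (h : ReflTransGen (fun a b => w a b = 0) x y) :
    dist w x y = 0 := by
  induction h using ReflTransGen.head_induction_on with
  | refl => exact dist_self w y
  | head hab _ ih =>
    exact nonpos_iff_eq_zero.1 ((dist_le_add_dist w _ _ y).trans_eq (by rw [hab, ih, add_zero]))

end Walks

lemma ncard_le_two_of_subset_union {α : Type*} {s t u : Set α} (h : s ⊆ t ∪ u)
    (ht : t.Subsingleton) (hu : u.Subsingleton) : s.ncard ≤ 2 :=
  calc s.ncard ≤ (t ∪ u).ncard := Set.ncard_le_ncard h (ht.finite.union hu.finite)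
    _ ≤ t.ncard + u.ncard := Set.ncard_union_le t u
    _ ≤ 1 + 1 :=
      add_le_add ((Set.ncard_le_one ht.finite).2 ht) ((Set.ncard_le_one hu.finite).2 hu)

section FiberOrder

variable {α β : Type*} [LinearOrder α] (c : α → β)

def FiberCovBy (a b : α) : Prop :=
  c a = c b ∧ a < b ∧ ∀ x, c x = c a → a < x → b ≤ x

def IsFiberMin (a : α) : Prop := ∀ x, c x = c a → a ≤ x

def IsFiberMax (a : α) : Prop := ∀ x, c x = c a → x ≤ a

variable {c}

lemma subsingleton_fiberCovBy_left (b : α) : {a | FiberCovBy c a b}.Subsingleton := by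
  rintro a ⟨hab, hlt, hmin⟩ a' ⟨hab', hlt', hmin'⟩
  exact le_antisymm (not_lt.1 fun h => (hmin' a (hab.trans hab'.symm) h).not_gt hlt)
    (not_lt.1 fun h => (hmin a' (hab'.trans hab.symm) h).not_gt hlt')

lemma subsingleton_fiberCovBy_right (a : α) : {b | FiberCovBy c a b}.Subsingleton :=
  fun _ hb _ hb' => le_antisymm (hb.2.2 _ hb'.1.symm hb'.2.1) (hb'.2.2 _ hb.1.symm hb.2.1)

lemma subsingleton_isFiberMin (y : β) : {a | c a = y ∧ IsFiberMin c a}.Subsingleton :=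
  fun _ ha _ ha' => le_antisymm (ha.2 _ (ha'.1.trans ha.1.symm)) (ha'.2 _ (ha.1.trans ha'.1.symm))

lemma subsingleton_isFiberMax (y : β) : {a | c a = y ∧ IsFiberMax c a}.Subsingleton :=
  fun _ ha _ ha' => le_antisymm (ha'.2 _ (ha.1.trans ha'.1.symm)) (ha.2 _ (ha'.1.trans ha.1.symm))

lemma FiberCovBy.not_isFiberMin_right {a b : α} (h : FiberCovBy c a b) : ¬ IsFiberMin c b :=
  fun hb => (hb a h.1).not_gt h.2.1

lemma FiberCovBy.not_isFiberMax_left {a b : α} (h : FiberCovBy c a b) : ¬ IsFiberMax c a :=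
  fun ha => (ha b h.1.symm).not_gt h.2.1

variable [Finite α]

lemma exists_isFiberMin_le (a : α) : ∃ m, c m = c a ∧ IsFiberMin c m ∧ m ≤ a := by
  obtain ⟨m, hm, hmin⟩ := Set.exists_min_image {x | c x = c a} id (Set.toFinite _) ⟨a, rfl⟩
  exact ⟨m, hm, fun x hx => hmin x (hx.trans hm), hmin a rfl⟩

lemma exists_le_isFiberMax (a : α) : ∃ m, c m = c a ∧ IsFiberMax c m ∧ a ≤ m := by
  obtain ⟨m, hm, hmax⟩ := Set.exists_max_image {x | c x = c a} id (Set.toFinite _) ⟨a, rfl⟩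
  exact ⟨m, hm, fun x hx => hmax x (hx.trans hm), hmax a rfl⟩

lemma reflTransGen_fiberCovBy {a b : α} (h : c a = c b) (hab : a ≤ b) :
    ReflTransGen (FiberCovBy c) a b := by
  classical
  let F := {x // c x = c b}
  have : Fintype F := Fintype.ofFinite F
  let _ : LocallyFiniteOrder F := Fintype.toLocallyFiniteOrder
  have hcov (x y : F) (hxy : x ⋖ y) : FiberCovBy c x y :=
    ⟨x.2.trans y.2.symm, hxy.lt, fun z hz hxz =>
      not_lt.1 fun hzy => hxy.2 (c := ⟨z, hz.trans x.2⟩) hxz hzy⟩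
  exact (le_iff_reflTransGen_covBy.mp (show (⟨a, h⟩ : F) ≤ ⟨b, rfl⟩ from hab)).lift _ hcov

end FiberOrder

section Gadget

variable {V : Type*} (w : V → V → ℝ≥0∞)

def Edge : Type _ := {e : V × V // w e.1 e.2 < ⊤}

variable {w} in
def Edge.src (e : Edge w) : V := e.1.1

variable {w} in
def Edge.tgt (e : Edge w) : V := e.1.2

inductive Node : Type _
  | vertex (v : V)
  | outPort (e : Edge w)
  | inPort (e : Edge w)

variable {w} in
def Node.proj : Node w → V
  | .vertex v => v
  | .outPort e => e.src
  | .inPort e => e.tgt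

def Node.equivSum : Node w ≃ V ⊕ Edge w ⊕ Edge w where
  toFun
    | .vertex v => .inl v
    | .outPort e => .inr (.inl e)
    | .inPort e => .inr (.inr e)
  invFun
    | .inl v => .vertex v
    | .inr (.inl e) => .outPort e
    | .inr (.inr e) => .inPort e
  left_inv x := by cases x <;> rfl
  right_inv x := by rcases x with v | e | e <;> rfl

variable [Fintype V]

instance : Finite (Edge w) := Subtype.finite

noncomputable instance : Fintype (Edge w) := Fintype.ofFinite _

noncomputable instance : Fintype (Node w) := Fintype.ofEquiv _ (Node.equivSum w).symm

/-- An arbitrary linear order on the edges; it fixes the order of the ports along each chain. -/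
noncomputable instance : LinearOrder (Edge w) :=
  LinearOrder.lift' (Fintype.equivFin _) (Equiv.injective _)

lemma ncard_setOf_lt_top_eq_card_edge :
    {p : V × V | w p.1 p.2 < ⊤}.ncard = Fintype.card (Edge w) := by
  rw [← Nat.card_coe_set_eq, ← Nat.card_eq_fintype_card]
  rfl

lemma card_node : Fintype.card (Node w) = Fintype.card V + 2 * Fintype.card (Edge w) := by
  rw [Fintype.card_congr (Node.equivSum w), Fintype.card_sum, Fintype.card_sum, two_mul]

inductive Arc : Node w → Node w → Prop
  | enter {e : Edge w} : IsFiberMin Edge.src e → Arc (.vertex e.src) (.outPort e)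
  | outNext {e f : Edge w} : FiberCovBy Edge.src e f → Arc (.outPort e) (.outPort f)
  | cross (e : Edge w) : Arc (.outPort e) (.inPort e)
  | inNext {e f : Edge w} : FiberCovBy Edge.tgt e f → Arc (.inPort e) (.inPort f)
  | leave {e : Edge w} : IsFiberMax Edge.tgt e → Arc (.inPort e) (.vertex e.tgt)

def arcWeight : Node w → Node w → ℝ≥0∞
  | .outPort e, .inPort _ => w e.src e.tgt
  | _, _ => 0

open Classical in
noncomputable def gadgetWeight (x y : Node w) : ℝ≥0∞ :=
  if Arc w x y then arcWeight w x y else ⊤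

variable {w}

lemma gadgetWeight_of_arc {x y : Node w} (h : Arc w x y) :
    gadgetWeight w x y = arcWeight w x y :=
  if_pos h

lemma gadgetWeight_lt_top_iff {x y : Node w} : gadgetWeight w x y < ⊤ ↔ Arc w x y := by
  refine ⟨fun h => by_contra fun hxy => h.ne (if_neg hxy), fun h => ?_⟩
  rw [gadgetWeight_of_arc h]
  cases h with
  | cross e => exact e.2
  | _ => exact ENNReal.zero_lt_top

lemma gadgetWeight_eq_zero_or {x y : Node w} (h : gadgetWeight w x y < ⊤) :
    gadgetWeight w x y = 0 ∨ ∃ u v : V, w u v < ⊤ ∧ gadgetWeight w x y = w u v := by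
  have hxy := gadgetWeight_lt_top_iff.1 h
  rw [gadgetWeight_of_arc hxy]
  cases hxy with
  | cross e => exact Or.inr ⟨e.src, e.tgt, e.2, rfl⟩
  | _ => exact Or.inl rfl

lemma ncard_setOf_arc_from_le_two (x : Node w) : {y | Arc w x y}.ncard ≤ 2 := by
  cases x with
  | vertex u =>
    refine ncard_le_two_of_subset_union
      (t := .outPort '' {e | e.src = u ∧ IsFiberMin Edge.src e}) (u := ∅) ?_
      ((subsingleton_isFiberMin u).image _) Set.subsingleton_empty
    rintro _ ⟨⟩
    exact Or.inl ⟨_, ⟨rfl, ‹_›⟩, rfl⟩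
  | outPort e =>
    refine ncard_le_two_of_subset_union (t := .outPort '' {f | FiberCovBy Edge.src e f})
      (u := {.inPort e}) ?_
      ((subsingleton_fiberCovBy_right e).image _) Set.subsingleton_singleton
    rintro _ ⟨⟩
    · exact Or.inl ⟨_, ‹_›, rfl⟩
    · exact Or.inr rfl
  | inPort e =>
    refine ncard_le_two_of_subset_union (t := .inPort '' {f | FiberCovBy Edge.tgt e f})
      (u := {.vertex e.tgt}) ?_
      ((subsingleton_fiberCovBy_right e).image _) Set.subsingleton_singleton
    rintro _ ⟨⟩
    · exact Or.inl ⟨_, ‹_›, rfl⟩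
    · exact Or.inr rfl

lemma ncard_setOf_arc_to_le_two (y : Node w) : {x | Arc w x y}.ncard ≤ 2 := by
  cases y with
  | vertex v =>
    refine ncard_le_two_of_subset_union
      (t := .inPort '' {e | e.tgt = v ∧ IsFiberMax Edge.tgt e}) (u := ∅) ?_
      ((subsingleton_isFiberMax v).image _) Set.subsingleton_empty
    rintro _ ⟨⟩
    exact Or.inl ⟨_, ⟨rfl, ‹_›⟩, rfl⟩
  | outPort f =>
    refine ncard_le_two_of_subset_union (t := .outPort '' {e | FiberCovBy Edge.src e f})
      (u := {.vertex f.src}) ?_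
      ((subsingleton_fiberCovBy_left f).image _) Set.subsingleton_singleton
    rintro _ ⟨⟩
    · exact Or.inr rfl
    · exact Or.inl ⟨_, ‹_›, rfl⟩
  | inPort f =>
    refine ncard_le_two_of_subset_union (t := .inPort '' {e | FiberCovBy Edge.tgt e f})
      (u := {.outPort f}) ?_
      ((subsingleton_fiberCovBy_left f).image _) Set.subsingleton_singleton
    rintro _ ⟨⟩
    · exact Or.inr rfl
    · exact Or.inl ⟨_, ‹_›, rfl⟩

variable (w) in
/-- Every arc enters an out-port, is a cross arc, or leaves an in-port, and each port has only one
such arc; `e₀` is a junk value. -/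
def arcLabel (e₀ : Edge w) : Node w × Node w → Edge w × Fin 3
  | (_, .outPort f) => (f, 0)
  | (.outPort e, _) => (e, 1)
  | (.inPort e, _) => (e, 2)
  | _ => (e₀, 0)

lemma injOn_arcLabel (e₀ : Edge w) : Set.InjOn (arcLabel w e₀) {p | Arc w p.1 p.2} := by
  rintro ⟨x, y⟩ (h : Arc w x y) ⟨x', y'⟩ (h' : Arc w x' y') heq
  cases h <;> cases h' <;>
    simp only [arcLabel, Prod.mk.injEq, Fin.reduceEq, and_false, and_true, Node.vertex.injEq,
      Node.outPort.injEq, Node.inPort.injEq] at heq ⊢ <;>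
    subst heq <;> try simp
  all_goals first
    | exact (FiberCovBy.not_isFiberMin_right ‹_› ‹_›).elim
    | exact (FiberCovBy.not_isFiberMax_left ‹_› ‹_›).elim
    | exact subsingleton_fiberCovBy_left _ ‹_› ‹_›
    | exact subsingleton_fiberCovBy_right _ ‹_› ‹_›

lemma ncard_setOf_arc_le :
    {p : Node w × Node w | Arc w p.1 p.2}.ncard ≤ 3 * Fintype.card (Edge w) := by
  rcases isEmpty_or_nonempty (Edge w) with _ | ⟨⟨e₀⟩⟩
  · have : {p : Node w × Node w | Arc w p.1 p.2} = ∅ :=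
      Set.eq_empty_of_forall_notMem fun ⟨_, _⟩ h => by
        cases h <;> exact isEmptyElim ‹Edge w›
    simp [this]
  · calc _ ≤ (Set.univ : Set (Edge w × Fin 3)).ncard :=
          Set.ncard_le_ncard_of_injOn _ (fun _ _ => trivial) (injOn_arcLabel e₀)
      _ = 3 * Fintype.card (Edge w) := by
          rw [Set.ncard_univ, Nat.card_eq_fintype_card, Fintype.card_prod, Fintype.card_fin,
            mul_comm]

lemma dist_vertex_outPort (e : Edge w) :
    dist (gadgetWeight w) (.vertex e.src) (.outPort e) = 0 := by
  obtain ⟨m, hm, hmin, hle⟩ := exists_isFiberMin_le (c := Edge.src) e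
  apply dist_eq_zero_of_reflTransGen
  refine .head (b := .outPort m) ?_ ?_
  · rw [← hm]; exact gadgetWeight_of_arc (.enter hmin)
  · exact (reflTransGen_fiberCovBy hm hle).lift _ fun _ _ h => gadgetWeight_of_arc (.outNext h)

lemma dist_inPort_vertex (e : Edge w) :
    dist (gadgetWeight w) (.inPort e) (.vertex e.tgt) = 0 := by
  obtain ⟨m, hm, hmax, hle⟩ := exists_le_isFiberMax (c := Edge.tgt) e
  apply dist_eq_zero_of_reflTransGen
  refine .tail (b := .inPort m) ?_ ?_
  · exact (reflTransGen_fiberCovBy hm.symm hle).lift _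
      fun _ _ h => gadgetWeight_of_arc (.inNext h)
  · rw [← hm]; exact gadgetWeight_of_arc (.leave hmax)

lemma dist_gadgetWeight_vertex_le (u v : V) :
    dist (gadgetWeight w) (.vertex u) (.vertex v) ≤ w u v := by
  rcases lt_or_eq_of_le (le_top : w u v ≤ ⊤) with h | h
  · let e : Edge w := ⟨(u, v), h⟩
    calc dist (gadgetWeight w) (.vertex e.src) (.vertex e.tgt)
        ≤ dist (gadgetWeight w) (.vertex e.src) (.outPort e) +
            (dist (gadgetWeight w) (.outPort e) (.inPort e) +
              dist (gadgetWeight w) (.inPort e) (.vertex e.tgt)) :=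
          (dist_triangle_s9 _ _ _ _).trans (add_le_add_right (dist_triangle_s9 _ _ _ _) _)
      _ ≤ 0 + (w u v + 0) := by
          rw [dist_vertex_outPort, dist_inPort_vertex]
          gcongr
          exact (dist_le_weight _ _ _).trans_eq (gadgetWeight_of_arc (.cross e))
      _ = w u v := by rw [zero_add, add_zero]
  · exact h ▸ le_top

lemma dist_proj_le_gadgetWeight (x y : Node w) :
    dist w x.proj y.proj ≤ gadgetWeight w x y := by
  by_cases h : Arc w x y
  · rw [gadgetWeight_of_arc h]
    cases h with
    | cross e => exact dist_le_weight w _ _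
    | enter _ | leave _ => exact (dist_self w _).le
    | outNext h | inNext h => exact (congrArg (dist w _) h.1.symm).trans_le (dist_self w _).le
  · rw [gadgetWeight, if_neg h]
    exact le_top

lemma dist_gadgetWeight_vertex (u v : V) :
    dist (gadgetWeight w) (.vertex u) (.vertex v) = dist w u v :=
  le_antisymm (dist_map_le w _ Node.vertex dist_gadgetWeight_vertex_le u v)
    (dist_map_le _ w Node.proj dist_proj_le_gadgetWeight (.vertex u) (.vertex v))

end Gadget

theorem constant_degree_transformation_general {V : Type} [Fintype V] (w : V → V → ℝ≥0∞) :
    ∃ (V' : Type) (instV' : Fintype V') (w' : V' → V' → ℝ≥0∞) (φ : V → V'),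
      Function.Injective φ ∧
      @Fintype.card V' instV' ≤
        2 * ({p : V × V | w p.1 p.2 < ⊤}).ncard + Fintype.card V ∧
      (∀ x : V', ({y : V' | w' x y < ⊤}).ncard ≤ 2 ∧
        ({y : V' | w' y x < ⊤}).ncard ≤ 2) ∧
      ({p : V' × V' | w' p.1 p.2 < ⊤}).ncard ≤
        3 * ({p : V × V | w p.1 p.2 < ⊤}).ncard ∧
      (∀ x y : V', w' x y < ⊤ → w' x y = 0 ∨ ∃ u v : V, w u v < ⊤ ∧ w' x y = w u v) ∧
      (∀ u v : V, dist w' (φ u) (φ v) = dist w u v) := by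
  refine ⟨Node w, inferInstance, gadgetWeight w, Node.vertex, fun _ _ => Node.vertex.inj, ?_,
    fun x => ⟨?_, ?_⟩, ?_, fun _ _ => gadgetWeight_eq_zero_or, dist_gadgetWeight_vertex⟩
  · rw [card_node w, ncard_setOf_lt_top_eq_card_edge, add_comm]
  · simpa only [gadgetWeight_lt_top_iff] using ncard_setOf_arc_from_le_two x
  · simpa only [gadgetWeight_lt_top_iff] using ncard_setOf_arc_to_le_two x
  · simpa only [gadgetWeight_lt_top_iff, ncard_setOf_lt_top_eq_card_edge] using
      ncard_setOf_arc_le (w := w)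

/-- Constant-degree transformation preserving shortest paths. -/
theorem constant_degree_transformation {V : Type} [Fintype V] (w : V → V → ℝ≥0∞)
    (hloop : ∀ u : V, w u u = ⊤) :
    ∃ (V' : Type) (instV' : Fintype V') (w' : V' → V' → ℝ≥0∞) (φ : V → V'),
      Function.Injective φ ∧
      @Fintype.card V' instV' ≤
        2 * ({p : V × V | w p.1 p.2 < ⊤}).ncard + Fintype.card V ∧
      (∀ x : V', ({y : V' | w' x y < ⊤}).ncard ≤ 2 ∧
        ({y : V' | w' y x < ⊤}).ncard ≤ 2) ∧
      ({p : V' × V' | w' p.1 p.2 < ⊤}).ncard ≤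
        3 * ({p : V × V | w p.1 p.2 < ⊤}).ncard ∧
      (∀ x y : V', w' x y < ⊤ → w' x y = 0 ∨ ∃ u v : V, w u v < ⊤ ∧ w' x y = w u v) ∧
      (∀ u v : V, dist w' (φ u) (φ v) = dist w u v) :=
  constant_degree_transformation_general w

end SSSP
end
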